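/- arXiv:2012.06205 — 2 statements merged into one kernel-verified Lean document; each statement's English description precedes it below -/
import Mathlib

section
/- Let Φ ∈ ℝ^{m×n} satisfy the RIP of order 2K with constant δ ∈ (0,1). Let x ∈ ℝ^n be supported on a set T with |T| ≤ K, let z ∈ ℝ^n be supported on a set T' with |T'| ≤ K, and set Γ = T \ T'. Then for any θ₁ ∈ (0,1) and any v ∈ ℝ^m, ‖Φ(x − z) + v‖₂² ≥ (1 − θ₁)(1 − δ)·Σ_{i∈Γ} x_i² − (1/θ₁ − 1)‖v‖₂². -/
open Finset

/-- Let `Φ ∈ ℝ^{m×n}` satisfy the RIP of order `2K` with constant `δ ∈ (0,1)`. Let `x`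
be supported on `T` with `|T| ≤ K`, let `z` be supported on `T'` with `|T'| ≤ K`, and set
`Γ = T \ T'`. Then for any `θ₁ ∈ (0,1)` and any `v ∈ ℝ^m`,
`‖Φ(x − z) + v‖₂² ≥ (1 − θ₁)(1 − δ)·Σ_{i∈Γ} x_i² − (1/θ₁ − 1)‖v‖₂²`. -/
theorem stmt_6 (m n K : ℕ) (Φ : Matrix (Fin m) (Fin n) ℝ)
    (δ : ℝ) (hδ0 : 0 < δ) (hδ1 : δ < 1)
    (hRIP : ∀ w : Fin n → ℝ,
      (Finset.univ.filter (fun i => w i ≠ 0)).card ≤ 2 * K →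
      (1 - δ) * (∑ i, (w i) ^ 2) ≤ ∑ j, (Φ.mulVec w j) ^ 2 ∧
      ∑ j, (Φ.mulVec w j) ^ 2 ≤ (1 + δ) * (∑ i, (w i) ^ 2))
    (x z : Fin n → ℝ) (T T' : Finset (Fin n))
    (hTcard : T.card ≤ K) (hT'card : T'.card ≤ K)
    (hx : ∀ i ∉ T, x i = 0) (hz : ∀ i ∉ T', z i = 0)
    (θ₁ : ℝ) (hθ₁0 : 0 < θ₁) (hθ₁1 : θ₁ < 1) (v : Fin m → ℝ) :
    (1 - θ₁) * (1 - δ) * (∑ i ∈ T \ T', (x i) ^ 2) - (1 / θ₁ - 1) * (∑ j, (v j) ^ 2)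
      ≤ ∑ j, (Φ.mulVec (x - z) j + v j) ^ 2 := by
  set w := x - z with hw
  -- support bound
  have hsupp : (Finset.univ.filter (fun i => w i ≠ 0)).card ≤ 2 * K := by
    have hsub : (Finset.univ.filter (fun i => w i ≠ 0)) ⊆ T ∪ T' := by
      intro i hi
      simp only [mem_filter] at hi
      by_contra hiT
      simp only [mem_union, not_or] at hiT
      exact hi.2 (by simp [hw, hx i hiT.1, hz i hiT.2])
    calc (Finset.univ.filter (fun i => w i ≠ 0)).card ≤ (T ∪ T').card :=
          card_le_card hsub
      _ ≤ T.card + T'.card := card_union_le _ _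
      _ ≤ 2 * K := by omega
  have hrip := (hRIP w hsupp).1
  -- Γ sum ≤ full sum of w²
  have hΓ : (∑ i ∈ T \ T', (x i) ^ 2) ≤ ∑ i, (w i) ^ 2 := by
    have h1 : (∑ i ∈ T \ T', (x i) ^ 2) = ∑ i ∈ T \ T', (w i) ^ 2 := by
      apply Finset.sum_congr rfl
      intro i hi
      have : z i = 0 := hz i (mem_sdiff.mp hi).2
      simp [hw, this]
    rw [h1]
    exact Finset.sum_le_sum_of_subset_of_nonneg (subset_univ _)
      (fun i _ _ => sq_nonneg _)
  -- pointwise inequality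
  have hpt : ∀ j, (1 - θ₁) * (Φ.mulVec w j) ^ 2 - (1 / θ₁ - 1) * (v j) ^ 2
      ≤ (Φ.mulVec w j + v j) ^ 2 := by
    intro j
    have hθ : θ₁ ≠ 0 := ne_of_gt hθ₁0
    have h1 : 1 / θ₁ * θ₁ = 1 := one_div_mul_cancel hθ
    nlinarith [sq_nonneg (θ₁ * Φ.mulVec w j + v j), sq_nonneg (v j),
      mul_pos hθ₁0 hθ₁0, sq_nonneg (Φ.mulVec w j)]
  calc (1 - θ₁) * (1 - δ) * (∑ i ∈ T \ T', (x i) ^ 2) - (1 / θ₁ - 1) * (∑ j, (v j) ^ 2)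
      ≤ (1 - θ₁) * ((1 - δ) * (∑ i, (w i) ^ 2)) - (1 / θ₁ - 1) * (∑ j, (v j) ^ 2) := by
        have h0 : (0:ℝ) ≤ (1 - θ₁) * (1 - δ) := by nlinarith
        nlinarith [mul_le_mul_of_nonneg_left hΓ h0]
    _ ≤ (1 - θ₁) * (∑ j, (Φ.mulVec w j) ^ 2) - (1 / θ₁ - 1) * (∑ j, (v j) ^ 2) := by
        have := mul_le_mul_of_nonneg_left hrip (by linarith : (0:ℝ) ≤ 1 - θ₁)
        linarith
    _ = ∑ j, ((1 - θ₁) * (Φ.mulVec w j) ^ 2 - (1 / θ₁ - 1) * (v j) ^ 2) := by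
        rw [Finset.sum_sub_distrib, Finset.mul_sum, Finset.mul_sum]
    _ ≤ ∑ j, (Φ.mulVec w j + v j) ^ 2 := Finset.sum_le_sum fun j _ => hpt j
end

section
/- Let H be a real inner product space, let S ⊆ S' be finite-dimensional subspaces of H, let y ∈ H, and let r = y − P_S(y) and r' = y − P_{S'}(y), where P_S and P_{S'} denote orthogonal projection onto S and S' respectively. Then for any nonzero φ ∈ S', ‖r'‖² ≤ ‖r‖² − ⟨φ, r⟩²/‖φ‖². -/
/-!
Write `y - P_S y = (y - P_{S'} y) + (P_{S'} y - P_S y)`. The first summand is orthogonal to `S'`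
and the second lies in `S'`, so Pythagoras gives `‖r‖² = ‖r'‖² + ‖d‖²` with
`d = P_{S'} y - P_S y`, and `⟪φ, r⟫ = ⟪φ, d⟫` for `φ ∈ S'`. Cauchy–Schwarz then bounds
`⟪φ, d⟫² / ‖φ‖²` by `‖d‖²`.
-/

section

variable {E : Type*} [NormedAddCommGroup E] [InnerProductSpace ℝ E]

theorem real_inner_sq_div_norm_sq_le (x y : E) : inner ℝ x y ^ 2 / ‖x‖ ^ 2 ≤ ‖y‖ ^ 2 :=
  div_le_of_le_mul₀ (sq_nonneg _) (sq_nonneg _) <| by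
    rw [← sq_abs, ← mul_pow, mul_comm ‖y‖]
    exact pow_le_pow_left₀ (abs_nonneg _) (abs_real_inner_le_norm x y) 2

namespace Submodule

variable {K K' : Submodule ℝ E} [K.HasOrthogonalProjection] [K'.HasOrthogonalProjection]

theorem inner_sub_eq_inner_starProjection_sub {φ : E} (hφ : φ ∈ K) (y z : E) :
    inner ℝ φ (y - z) = inner ℝ φ (K.starProjection y - z) := by
  rw [← sub_add_sub_cancel y (K.starProjection y) z, inner_add_right,
    inner_right_of_mem_orthogonal hφ (K.sub_starProjection_mem_orthogonal y), zero_add]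

theorem norm_sub_starProjection_sq_of_le (h : K ≤ K') (y : E) :
    ‖y - K.starProjection y‖ ^ 2 =
      ‖y - K'.starProjection y‖ ^ 2 + ‖K'.starProjection y - K.starProjection y‖ ^ 2 := by
  have hd : K'.starProjection y - K.starProjection y ∈ K' :=
    sub_mem (K'.starProjection_apply_mem y) (h (K.starProjection_apply_mem y))
  rw [← sub_add_sub_cancel y (K'.starProjection y) (K.starProjection y), sq, sq, sq,
    norm_add_sq_eq_norm_sq_add_norm_sq_real
      (inner_left_of_mem_orthogonal hd (K'.sub_starProjection_mem_orthogonal y))]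

end Submodule

end

theorem stmt_8_general {H : Type*} [NormedAddCommGroup H] [InnerProductSpace ℝ H]
    (S S' : Submodule ℝ H) [FiniteDimensional ℝ S] [FiniteDimensional ℝ S']
    (hSS' : S ≤ S') (y : H)
    (r r' : H) (hr : r = y - (S.orthogonalProjectionOnto y : H))
    (hr' : r' = y - (S'.orthogonalProjectionOnto y : H))
    (φ : H) (hφS' : φ ∈ S') :
    ‖r'‖ ^ 2 ≤ ‖r‖ ^ 2 - (inner ℝ φ r : ℝ) ^ 2 / ‖φ‖ ^ 2 := by
  simp only [Submodule.coe_orthogonalProjectionOnto_apply] at hr hr'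
  subst hr hr'
  rw [Submodule.norm_sub_starProjection_sq_of_le hSS' y,
    Submodule.inner_sub_eq_inner_starProjection_sub hφS']
  linarith [real_inner_sq_div_norm_sq_le φ (S'.starProjection y - S.starProjection y)]

/-- Let `H` be a real inner product space, let `S ⊆ S'` be finite-dimensional subspaces of
`H`, let `y ∈ H`, and let `r = y − P_S(y)` and `r' = y − P_{S'}(y)` where `P_S`, `P_{S'}`
are the orthogonal projections. Then for any nonzero `φ ∈ S'`,
`‖r'‖² ≤ ‖r‖² − ⟨φ, r⟩²/‖φ‖²`. -/
theorem stmt_8 {H : Type*} [NormedAddCommGroup H] [InnerProductSpace ℝ H]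
    (S S' : Submodule ℝ H) [FiniteDimensional ℝ S] [FiniteDimensional ℝ S']
    (hSS' : S ≤ S') (y : H)
    (r r' : H) (hr : r = y - (S.orthogonalProjectionOnto y : H))
    (hr' : r' = y - (S'.orthogonalProjectionOnto y : H))
    (φ : H) (hφS' : φ ∈ S') (hφ : φ ≠ 0) :
    ‖r'‖ ^ 2 ≤ ‖r‖ ^ 2 - (inner ℝ φ r : ℝ) ^ 2 / ‖φ‖ ^ 2 :=
  stmt_8_general S S' hSS' y r r' hr hr' φ hφS'
end
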